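/- If A is a matrix all of whose rows are pairwise distinct unbordered strings of the same length s from a cross bifix-free set, and the first and last rows of A are distinct and do not occur as inner rows, then A is self non-overlapping: the only block partitions of A with a common block satisfying the frame condition is the trivial one where the block is A itself. -/

import Mathlib

/-- The four sides (borders) of a matrix: top, bottom, left, right. -/
inductive Side | top | bottom | left | right
  deriving DecidableEq

/-- A matrix over an alphabet `α`, with `rows × cols` relevant entries. -/
structure Mat (α : Type*) where
  rows : ℕ
  cols : ℕ
  entry : ℕ → ℕ → α

namespace Mat

/-- The `i`-th row of a matrix, as a string (list) of length `cols`. -/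
def row {α : Type*} (A : Mat α) (i : ℕ) : List α :=
  (List.range A.cols).map (fun j => A.entry i j)

/-- Two matrices have the same content (same dimensions and same in-range entries). -/
def Same {α : Type*} (A B : Mat α) : Prop :=
  A.rows = B.rows ∧ A.cols = B.cols ∧
    ∀ i j, i < A.rows → j < A.cols → A.entry i j = B.entry i j

end Mat

/-- A cut sequence partitioning `[0, m)` into `h` nonempty consecutive intervals. -/
def IsCuts (m h : ℕ) (r : Fin (h+1) → ℕ) : Prop :=
  r 0 = 0 ∧ r (Fin.last h) = m ∧ StrictMono r

/-- The frame of block `(i,j)` in a block partition with `h` block-rows and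
`k` block-columns: which borders of the full matrix the block touches. -/
def frame (i h j k : ℕ) : Set Side :=
  {s | (s = Side.top ∧ i = 0) ∨ (s = Side.bottom ∧ i = h - 1) ∨
       (s = Side.left ∧ j = 0) ∨ (s = Side.right ∧ j = k - 1)}

/-- A witness that matrices `A` and `B` overlap via block partitions of `A`
(with `h × k` blocks) and of `B` (with `h' × k'` blocks): a common block
`A_{ij} = B_{i'j'}` whose frames jointly cover `{t,b,l,r}`. -/
structure OverlapWitness {α : Type*} (A B : Mat α) (h k h' k' : ℕ) : Type where
  r : Fin (h+1) → ℕ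
  c : Fin (k+1) → ℕ
  r' : Fin (h'+1) → ℕ
  c' : Fin (k'+1) → ℕ
  cutsR : IsCuts A.rows h r
  cutsC : IsCuts A.cols k c
  cutsR' : IsCuts B.rows h' r'
  cutsC' : IsCuts B.cols k' c'
  i : Fin h
  j : Fin k
  i' : Fin h'
  j' : Fin k'
  sameHeight : r i.succ - r i.castSucc = r' i'.succ - r' i'.castSucc
  sameWidth : c j.succ - c j.castSucc = c' j'.succ - c' j'.castSucc
  blockEq : ∀ x y, x < r i.succ - r i.castSucc → y < c j.succ - c j.castSucc →
      A.entry (r i.castSucc + x) (c j.castSucc + y)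
        = B.entry (r' i'.castSucc + x) (c' j'.castSucc + y)
  frames : frame i.val h j.val k ∪ frame i'.val h' j'.val k' = Set.univ

/-- `A` and `B` are overlapping matrices. -/
def Overlap {α : Type*} (A B : Mat α) : Prop :=
  ∃ h k h' k', Nonempty (OverlapWitness A B h k h' k')

/-- `A` and `B` are strong non-overlapping matrices. -/
def StrongNonOverlappingMat {α : Type*} (A B : Mat α) : Prop := ¬ Overlap A B

/-- `A` is self non-overlapping: the only overlap of `A` with itself is the
trivial one where the common block is `A` itself. -/
def SelfNonOverlapping {α : Type*} (A : Mat α) : Prop :=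
  ∀ h k h' k' (w : OverlapWitness A A h k h' k'),
    w.r w.i.succ - w.r w.i.castSucc = A.rows ∧
    w.c w.j.succ - w.c w.j.castSucc = A.cols

/-- `Borders v w`: some nonempty proper prefix of `v` equals a proper suffix of `w`. -/
def Borders {α : Type*} (v w : List α) : Prop :=
  ∃ p : List α, p ≠ [] ∧ p <+: v ∧ p ≠ v ∧ p <:+ w ∧ p ≠ w

/-- A string is unbordered (self non-overlapping / bifix-free). -/
def Unbordered {α : Type*} (v : List α) : Prop := ¬ Borders v v

/-- Two strings are non-overlapping (cross bifix-free): no nonempty proper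
prefix of one equals a proper suffix of the other. -/
def NonOverlappingStr {α : Type*} (v w : List α) : Prop :=
  ¬ Borders v w ∧ ¬ Borders w v

/-- `v` occurs as an inner factor of `w`: `w = a ++ v ++ b` with `a, b` not both empty. -/
def InnerFactor {α : Type*} (v w : List α) : Prop :=
  ∃ a b : List α, (a ≠ [] ∨ b ≠ []) ∧ w = a ++ v ++ b

/-- Two strings are strong non-overlapping. -/
def StrongNonOverlappingStr {α : Type*} (v w : List α) : Prop :=
  NonOverlappingStr v w ∧ ¬ InnerFactor v w ∧ ¬ InnerFactor w v

/-- A strong non-overlapping set of strings. -/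
def SNOSet {α : Type*} (W : Set (List α)) : Prop :=
  ∀ v ∈ W, ∀ w ∈ W, StrongNonOverlappingStr v w

/-! The common block is a segment of consecutive rows of `A`, cut to a common window of columns.
The left and right sides of the frame force that window to be a prefix of one row of `A` and a
suffix of another; cross bifix-freeness of the rows leaves only the full width. The block is then
a run of whole rows occurring at two heights of `A`; distinct rows force the two heights to agree,
so the block touches the top and the bottom of `A` and has full height. -/

namespace IsCuts

variable {m h : ℕ} {r : Fin (h+1) → ℕ}

lemma castSucc_lt_succ (hr : IsCuts m h r) (i : Fin h) : r i.castSucc < r i.succ :=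
  hr.2.2 Fin.castSucc_lt_succ

lemma succ_le (hr : IsCuts m h r) (i : Fin h) : r i.succ ≤ m :=
  hr.2.1 ▸ hr.2.2.monotone (Fin.le_last i.succ)

lemma castSucc_eq_zero (hr : IsCuts m h r) {i : Fin h} (hi : i.val = 0) : r i.castSucc = 0 := by
  rw [show i.castSucc = 0 from Fin.ext hi, hr.1]

lemma succ_eq_of_val_eq (hr : IsCuts m h r) {i : Fin h} (hi : i.val = h - 1) :
    r i.succ = m := by
  rw [show i.succ = Fin.last h from Fin.ext (by simp only [Fin.val_succ, Fin.val_last]; omega),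
    hr.2.1]

end IsCuts

lemma frame_union_eq_univ_iff {i h j k i' h' j' k' : ℕ} :
    frame i h j k ∪ frame i' h' j' k' = Set.univ ↔
      (i = 0 ∨ i' = 0) ∧ (i = h - 1 ∨ i' = h' - 1) ∧
        (j = 0 ∨ j' = 0) ∧ (j = k - 1 ∨ j' = k' - 1) := by
  rw [Set.eq_univ_iff_forall]
  constructor
  · intro H
    exact ⟨by simpa [frame] using H .top, by simpa [frame] using H .bottom,
      by simpa [frame] using H .left, by simpa [frame] using H .right⟩
  · rintro ⟨ht, hb, hl, hr⟩ (_ | _ | _ | _) <;> simp [frame, *]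

lemma borders_of_prefix_of_suffix {α : Type*} {p v w : List α} (hp : p ≠ []) (hpv : p <+: v)
    (hpw : p <:+ w) (hv : p.length < v.length) (hw : p.length < w.length) : Borders v w :=
  ⟨p, hp, hpv, fun h => hv.ne (congrArg List.length h), hpw,
    fun h => hw.ne (congrArg List.length h)⟩

namespace Mat

variable {α : Type*} (A : Mat α)

def rowSegment (a s W : ℕ) : List α :=
  (List.range W).map (fun y => A.entry a (s + y))

lemma length_row (a : ℕ) : (A.row a).length = A.cols := by
  simp [row]

lemma rowSegment_zero_eq_take {a W : ℕ} (hW : W ≤ A.cols) :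
    A.rowSegment a 0 W = (A.row a).take W := by
  apply List.ext_getElem
  · simp [rowSegment, row, hW]
  · intro n _ _
    simp [rowSegment, row]

lemma rowSegment_zero_cols (a : ℕ) : A.rowSegment a 0 A.cols = A.row a := by
  rw [A.rowSegment_zero_eq_take le_rfl, ← A.length_row a, List.take_length]

lemma rowSegment_eq_drop {a s W : ℕ} (hs : s + W = A.cols) :
    A.rowSegment a s W = (A.row a).drop s := by
  apply List.ext_getElem
  · simp only [rowSegment, List.length_map, List.length_range, row, List.length_drop]
    omega
  · intro n _ _
    simp [rowSegment, row]

lemma borders_of_rowSegment_eq {a b s W : ℕ} (hW0 : 0 < W) (hW : W < A.cols)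
    (hs : s + W = A.cols) (heq : A.rowSegment a 0 W = A.rowSegment b s W) :
    Borders (A.row a) (A.row b) := by
  refine borders_of_prefix_of_suffix (p := A.rowSegment a 0 W) ?_ ?_ ?_ ?_ ?_
  · simp only [rowSegment, ne_eq, List.map_eq_nil_iff, List.range_eq_nil]
    omega
  · rw [A.rowSegment_zero_eq_take hW.le]; exact List.take_prefix _ _
  · rw [heq, A.rowSegment_eq_drop hs]; exact List.drop_suffix _ _
  all_goals simpa [rowSegment, length_row] using hW

end Mat

namespace OverlapWitness

variable {α : Type*} {A B : Mat α} {h k h' k' : ℕ}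

section

variable (w : OverlapWitness A B h k h' k')

def height : ℕ := w.r w.i.succ - w.r w.i.castSucc

def width : ℕ := w.c w.j.succ - w.c w.j.castSucc

lemma height_pos : 0 < w.height :=
  Nat.sub_pos_of_lt (w.cutsR.castSucc_lt_succ w.i)

lemma rowSegment_eq {x : ℕ} (hx : x < w.height) :
    A.rowSegment (w.r w.i.castSucc + x) (w.c w.j.castSucc) w.width
      = B.rowSegment (w.r' w.i'.castSucc + x) (w.c' w.j'.castSucc) w.width :=
  List.map_congr_left fun y hy => w.blockEq x y hx (List.mem_range.1 hy)

end

section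

variable (w : OverlapWitness A A h k h' k')

lemma width_eq_cols (hcbf : ∀ a b, a < A.rows → b < A.rows → ¬ Borders (A.row a) (A.row b)) :
    w.width = A.cols := by
  have hpos := w.cutsC.castSucc_lt_succ w.j
  have hle := w.cutsC.succ_le w.j
  have hpos' := w.cutsC'.castSucc_lt_succ w.j'
  have hle' := w.cutsC'.succ_le w.j'
  have hrow := w.cutsR.castSucc_lt_succ w.i
  have hrow_le := w.cutsR.succ_le w.i
  have hrow' := w.cutsR'.castSucc_lt_succ w.i'
  have hrow_le' := w.cutsR'.succ_le w.i'
  have hW' : w.width = w.c' w.j'.succ - w.c' w.j'.castSucc := w.sameWidth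
  have hseg := w.rowSegment_eq w.height_pos
  rw [Nat.add_zero, Nat.add_zero] at hseg
  obtain ⟨-, -, hleft, hright⟩ := frame_union_eq_univ_iff.1 w.frames
  unfold width at *
  by_contra hne
  rcases hleft with hl | hl <;> rcases hright with hr | hr
  · have := w.cutsC.castSucc_eq_zero hl
    have := w.cutsC.succ_eq_of_val_eq hr
    omega
  · have h0 := w.cutsC.castSucc_eq_zero hl
    rw [h0] at hseg
    have := w.cutsC'.succ_eq_of_val_eq hr
    exact hcbf _ _ (by omega) (by omega)
      (A.borders_of_rowSegment_eq (by omega) (by omega) (by omega) hseg)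
  · have h0 := w.cutsC'.castSucc_eq_zero hl
    rw [h0] at hseg
    have := w.cutsC.succ_eq_of_val_eq hr
    exact hcbf _ _ (by omega) (by omega)
      (A.borders_of_rowSegment_eq (by omega) (by omega) (by omega) hseg.symm)
  · have := w.cutsC'.castSucc_eq_zero hl
    have := w.cutsC'.succ_eq_of_val_eq hr
    omega

lemma row_eq_of_width_eq_cols (hwidth : w.width = A.cols) {x : ℕ} (hx : x < w.height) :
    A.row (w.r w.i.castSucc + x) = A.row (w.r' w.i'.castSucc + x) := by
  have hpos := w.cutsC.castSucc_lt_succ w.j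
  have hle := w.cutsC.succ_le w.j
  have hpos' := w.cutsC'.castSucc_lt_succ w.j'
  have hle' := w.cutsC'.succ_le w.j'
  have hW' : w.width = w.c' w.j'.succ - w.c' w.j'.castSucc := w.sameWidth
  have hseg := w.rowSegment_eq hx
  unfold width at hW' hwidth
  have hcj : w.c w.j.castSucc = 0 := by omega
  have hcj' : w.c' w.j'.castSucc = 0 := by omega
  rwa [hcj, hcj', width, hwidth, A.rowSegment_zero_cols, A.rowSegment_zero_cols] at hseg

end

end OverlapWitness

theorem stmt15_general {α : Type*} (A : Mat α)
    (hcbf : ∀ i j, i < A.rows → j < A.rows → ¬ Borders (A.row i) (A.row j))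
    (hdist : ∀ i j, i < A.rows → j < A.rows → i ≠ j → A.row i ≠ A.row j) :
    SelfNonOverlapping A := by
  intro h k h' k' w
  have hwidth := w.width_eq_cols hcbf
  refine ⟨?_, hwidth⟩
  obtain ⟨htop, hbot, -, -⟩ := frame_union_eq_univ_iff.1 w.frames
  have hle := w.cutsR.succ_le w.i
  have hpos' := w.cutsR'.castSucc_lt_succ w.i'
  have hle' := w.cutsR'.succ_le w.i'
  have hsame_start : w.r w.i.castSucc = w.r' w.i'.castSucc := by
    have hpos := w.height_pos
    unfold OverlapWitness.height at hpos
    by_contra hne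
    exact hdist _ _ (by omega) (by omega) hne (w.row_eq_of_width_eq_cols hwidth w.height_pos)
  have hstart : w.r w.i.castSucc = 0 := by
    rcases htop with ht | ht
    · exact w.cutsR.castSucc_eq_zero ht
    · exact hsame_start ▸ w.cutsR'.castSucc_eq_zero ht
  have hheight := w.sameHeight
  rcases hbot with hb | hb
  · have := w.cutsR.succ_eq_of_val_eq hb
    omega
  · have := w.cutsR'.succ_eq_of_val_eq hb
    omega

/-- If all rows of A are pairwise distinct unbordered strings from a cross
bifix-free set, and the first and last rows are distinct and do not occur as
inner rows, then A is self non-overlapping: the only overlap of A with itself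
is the trivial one where the common block is A itself. -/
theorem stmt15 {α : Type*} (A : Mat α) (hr : 0 < A.rows) (hc : 0 < A.cols)
    (hub : ∀ i, i < A.rows → Unbordered (A.row i))
    (hcbf : ∀ i j, i < A.rows → j < A.rows → ¬ Borders (A.row i) (A.row j))
    (hdist : ∀ i j, i < A.rows → j < A.rows → i ≠ j → A.row i ≠ A.row j)
    (hfl : A.row 0 ≠ A.row (A.rows - 1))
    (hinner : ∀ i, 0 < i → i < A.rows - 1 →
      A.row i ≠ A.row 0 ∧ A.row i ≠ A.row (A.rows - 1)) :
    SelfNonOverlapping A :=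
  stmt15_general A hcbf hdist
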